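/- arXiv:2010.01481 — 5 statements merged into one kernel-verified Lean document; each statement's English description precedes it below -/
import Mathlib

section
/- Let ℓ, r ≥ 3 and let H be an r-uniform hypergraph with maximum i-degree Δ_i for each 1 ≤ i ≤ r−1. If t ≥ r²·4^r·Δ_i^{1/(r−i)} for all 1 ≤ i ≤ r−1, then H has a subhypergraph H' of girth larger than ℓ with e(H') ≥ ex(t, C_{[ℓ]}^r)·t^{−r}·e(H). -/
set_option linter.unusedSectionVars false

/-- `H` contains a Berge `p`-cycle. -/
def IsBergeCycle {V : Type*} (H : Finset (Finset V)) (p : ℕ) : Prop :=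
  ∃ (v : ZMod p → V) (e : ZMod p → Finset V),
    Function.Injective v ∧ Function.Injective e ∧
    (∀ i, e i ∈ H) ∧ (∀ i, v i ∈ e i ∧ v (i + 1) ∈ e i)

/-- `H` has girth greater than `ℓ`. -/
def GirthGt {V : Type*} (H : Finset (Finset V)) (ℓ : ℕ) : Prop :=
  ∀ p, 2 ≤ p → p ≤ ℓ → ¬ IsBergeCycle H p

/-- `ex(t, C_{[ℓ]}^r)`: the maximum number of hyperedges of an `r`-uniform hypergraph
on `[t]` with girth greater than `ℓ`. -/
noncomputable def exGirth (r t ℓ : ℕ) : ℕ :=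
  sSup {m | ∃ H : Finset (Finset (Fin t)), (∀ e ∈ H, e.card = r) ∧ GirthGt H ℓ ∧ H.card = m}

section Walk
variable {α : Type*}

/-- A closed walk of length `q` in `J` with distinct consecutive vertices and edges. -/
def IsClosedWalk (J : Finset (Finset α)) (q : ℕ) (w : ℕ → α) (f : ℕ → Finset α) : Prop :=
  w q = w 0 ∧ f q = f 0 ∧
    ∀ i < q, f i ∈ J ∧ (w i ∈ f i ∧ w (i + 1) ∈ f i) ∧ w i ≠ w (i + 1) ∧ f i ≠ f (i + 1)

lemma walk_idx {J : Finset (Finset α)} {q : ℕ} {w : ℕ → α} {f : ℕ → Finset α}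
    (h : IsClosedWalk J q w f) {k : ℕ} (hk : k ≤ q) : w (k % q) = w k ∧ f (k % q) = f k := by
  rcases eq_or_lt_of_le hk with rfl | hlt
  · simp [Nat.mod_self, h.1, h.2.1]
  · rw [Nat.mod_eq_of_lt hlt]; exact ⟨rfl, rfl⟩

lemma walk_rotate {J : Finset (Finset α)} {q : ℕ} {w : ℕ → α} {f : ℕ → Finset α}
    (hq : 2 ≤ q) (h : IsClosedWalk J q w f) (s : ℕ) :
    IsClosedWalk J q (fun i => w ((i + s) % q)) (fun i => f ((i + s) % q)) := by
  have hq0 : 0 < q := by omega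
  refine ⟨?_, ?_, ?_⟩
  · show w ((q + s) % q) = w ((0 + s) % q)
    rw [Nat.add_mod_left, Nat.zero_add]
  · show f ((q + s) % q) = f ((0 + s) % q)
    rw [Nat.add_mod_left, Nat.zero_add]
  intro i hi
  set m := (i + s) % q with hm
  have hmlt : m < q := Nat.mod_lt _ hq0
  have hnext : (i + 1 + s) % q = (m + 1) % q := by
    conv_lhs => rw [show i + 1 + s = (i + s) + 1 by ring]
    rw [Nat.add_mod (i+s) 1 q, Nat.mod_eq_of_lt (show 1 < q by omega), ← hm, Nat.add_mod m 1 q,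
      Nat.mod_eq_of_lt (show 1 < q by omega)]
  have hidx := walk_idx h (show m + 1 ≤ q by omega)
  obtain ⟨h1, h2, h3, h4⟩ := h.2.2 m hmlt
  refine ⟨h1, ⟨h2.1, ?_⟩, ?_, ?_⟩ <;> simp only [hnext, hidx.1, hidx.2]
  · exact h2.2
  · exact h3
  · exact h4

lemma walk_to_berge {J : Finset (Finset α)} {q : ℕ} {w : ℕ → α} {f : ℕ → Finset α}
    (hq : 2 ≤ q) (h : IsClosedWalk J q w f)
    (hw : ∀ a b, a < b → b < q → w a ≠ w b) (hf : ∀ a b, a < b → b < q → f a ≠ f b) :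
    IsBergeCycle J q := by
  haveI : NeZero q := ⟨by omega⟩
  haveI : Fact (1 < q) := ⟨by omega⟩
  refine ⟨fun i => w i.val, fun i => f i.val, ?_, ?_, ?_, ?_⟩
  · intro i j hij
    by_contra hne
    have hvne : i.val ≠ j.val := fun hv => hne (ZMod.val_injective q hv)
    rcases lt_or_gt_of_ne hvne with hlt | hlt
    · exact hw _ _ hlt (ZMod.val_lt j) hij
    · exact hw _ _ hlt (ZMod.val_lt i) hij.symm
  · intro i j hij
    by_contra hne
    have hvne : i.val ≠ j.val := fun hv => hne (ZMod.val_injective q hv)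
    rcases lt_or_gt_of_ne hvne with hlt | hlt
    · exact hf _ _ hlt (ZMod.val_lt j) hij
    · exact hf _ _ hlt (ZMod.val_lt i) hij.symm
  · intro i; exact (h.2.2 i.val (ZMod.val_lt i)).1
  · intro i
    have hlt := ZMod.val_lt i
    have hv1 : (i + 1).val = (i.val + 1) % q := by rw [ZMod.val_add, ZMod.val_one]
    obtain ⟨h1, h2, h3, h4⟩ := h.2.2 i.val hlt
    refine ⟨h2.1, ?_⟩
    have := (walk_idx h (show i.val + 1 ≤ q by omega)).1
    simp only [hv1, this]
    exact h2.2

lemma girth_no_walk {J : Finset (Finset α)} {ℓ : ℕ} (hJ : GirthGt J ℓ) :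
    ∀ q, 2 ≤ q → q ≤ ℓ → ∀ w f, ¬ IsClosedWalk J q w f := by
  intro q
  induction q using Nat.strong_induction_on with
  | _ q IH =>
  intro hq2 hqℓ w f hwalk
  have inner : ∀ g, 1 ≤ g → g ≤ q - 1 → ∀ w f, IsClosedWalk J q w f → w 0 ≠ w g ∧ f 0 ≠ f g := by
    intro g
    induction g using Nat.strong_induction_on with
    | _ g IHg =>
    intro hg1 hgq w f hwf
    obtain ⟨hcw, hcf, hcond⟩ := hwf
    rcases eq_or_lt_of_le hg1 with rfl | hg2'
    · exact ⟨(hcond 0 (by omega)).2.2.1, (hcond 0 (by omega)).2.2.2⟩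
    rcases eq_or_lt_of_le hgq with hgq1 | hgmid
    · have hcq := hcond (q - 1) (by omega)
      have e1 : q - 1 + 1 = q := by omega
      rw [e1] at hcq
      subst hgq1
      exact ⟨fun hx => hcq.2.2.1 (by rw [← hx, hcw]), fun hx => hcq.2.2.2 (by rw [← hx, hcf])⟩
    have hg2 : 2 ≤ g := hg2'
    have hgq2 : g ≤ q - 2 := by omega
    constructor
    · intro hww
      set w' : ℕ → α := fun i => if i < g then w i else w 0 with hw'
      set f' : ℕ → Finset α := fun i => if i < g then f i else f 0 with hf'
      have hval : ∀ k ≤ g, w' k = w k := by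
        intro k hk
        rcases eq_or_lt_of_le hk with rfl | h
        · simp [hw', hww]
        · simp [hw', h]
      have : IsClosedWalk J g w' f' := by
        refine ⟨?_, ?_, ?_⟩
        · rw [hval g le_rfl, hval 0 (by omega), hww]
        · simp [hf', show (0:ℕ) < g by omega]
        · intro i hi
          have hiq : i < q := by omega
          obtain ⟨h1, h2, h3, h4⟩ := hcond i hiq
          have hfi : f' i = f i := by simp [hf', hi]
          rw [hval i (by omega), hval (i+1) (by omega), hfi]
          refine ⟨h1, h2, h3, ?_⟩
          rcases lt_or_ge (i+1) g with hlt | hge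
          · have hfeq : f' (i+1) = f (i+1) := by simp [hf', hlt]
            rw [hfeq]; exact h4
          · have hfeq : f' (i+1) = f 0 := by simp [hf', show ¬ (i+1 < g) by omega]
            rw [hfeq, show i = g - 1 by omega]
            have := (IHg (g-1) (by omega) (by omega) (by omega) w f ⟨hcw, hcf, hcond⟩).2
            exact this.symm
      exact IH g (by omega) hg2 (by omega) w' f' this
    · intro hff
      set w' : ℕ → α := fun i => if i < g then w (i+1) else w 1 with hw'
      set f' : ℕ → Finset α := fun i => if i < g - 1 then f (i+1) else if i = g - 1 then f 0 else f 1 with hf'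
      have hw1g : w 1 ≠ w g := by
        have hrot := walk_rotate hq2 ⟨hcw, hcf, hcond⟩ 1
        have := (IHg (g-1) (by omega) (by omega) (by omega) _ _ hrot).1
        simp only [Nat.zero_add] at this
        rw [Nat.mod_eq_of_lt (show 1 < q by omega),
          show g - 1 + 1 = g by omega, Nat.mod_eq_of_lt (show g < q by omega)] at this
        exact this
      have : IsClosedWalk J g w' f' := by
        refine ⟨?_, ?_, ?_⟩
        · simp [hw', show (0:ℕ) < g by omega]
        · simp [hf', show ¬ (g < g - 1) by omega, show g ≠ g - 1 by omega,
            show (0:ℕ) < g - 1 by omega]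
        · intro i hi
          rcases lt_or_ge i (g-1) with hilt | hige
          · obtain ⟨h1, h2, h3, h4⟩ := hcond (i+1) (by omega)
            have hwi : w' i = w (i+1) := by simp [hw', hi]
            have hwi1 : w' (i+1) = w (i+2) := by simp [hw', show i + 1 < g by omega]
            have hfi : f' i = f (i+1) := by simp [hf', hilt]
            rw [hwi, hwi1, hfi]
            refine ⟨h1, h2, h3, ?_⟩
            rcases lt_or_ge (i+1) (g-1) with hlt2 | hge2
            · have hfeq : f' (i+1) = f (i+1+1) := by simp [hf', hlt2]
              rw [hfeq]; exact h4
            · have hie : i + 1 = g - 1 := by omega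
              have hfeq : f' (i+1) = f 0 := by simp [hf', hie]
              rw [hfeq, hie, hff]
              have hgq' := hcond (g-1) (by omega)
              rw [show g - 1 + 1 = g by omega] at hgq'
              exact hgq'.2.2.2
          · have : i = g - 1 := by omega
            subst this
            have hfi : f' (g-1) = f 0 := by simp [hf']
            have hwi : w' (g-1) = w g := by
              simp only [hw', if_pos (show g - 1 < g by omega)]
              rw [show g - 1 + 1 = g by omega]
            have hwi1 : w' (g-1+1) = w 1 := by
              simp [hw', show ¬ (g - 1 + 1 < g) by omega]
            have hfi1 : f' (g-1+1) = f 1 := by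
              simp [hf', show ¬ (g - 1 + 1 < g - 1) by omega, show g - 1 + 1 ≠ g - 1 by omega]
            rw [hfi, hwi, hwi1, hfi1]
            obtain ⟨hg1', hg2', hg3', hg4'⟩ := hcond g (by omega)
            obtain ⟨h01, h02, h03, h04⟩ := hcond 0 (by omega)
            refine ⟨h01, ⟨by rw [hff]; exact hg2'.1, h02.2⟩, fun hx => hw1g hx.symm, h04⟩
      exact IH g (by omega) hg2 (by omega) w' f' this
  have hwinj : ∀ a b, a < b → b < q → w a ≠ w b := by
    intro a b hab hbq heq
    have hrot := walk_rotate hq2 hwalk a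
    have := (inner (b - a) (by omega) (by omega) _ _ hrot).1
    apply this
    simp only [Nat.zero_add]
    rw [Nat.mod_eq_of_lt (show a < q by omega), show b - a + a = b by omega,
      Nat.mod_eq_of_lt hbq, heq]
  have hfinj : ∀ a b, a < b → b < q → f a ≠ f b := by
    intro a b hab hbq heq
    have hrot := walk_rotate hq2 hwalk a
    have := (inner (b - a) (by omega) (by omega) _ _ hrot).2
    apply this
    simp only [Nat.zero_add]
    rw [Nat.mod_eq_of_lt (show a < q by omega), show b - a + a = b by omega,
      Nat.mod_eq_of_lt hbq, heq]
  exact hJ q hq2 hqℓ (walk_to_berge hq2 hwalk hwinj hfinj)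

end Walk

section Counting
open Finset
variable {ι : Type*} [Fintype ι] [DecidableEq ι] {t : ℕ}

/-- Counting functions by their restriction to a subset. -/
lemma restrict_count (s : Finset ι) (P : ({x // x ∈ s} → Fin t) → Prop) [DecidablePred P]
    [DecidablePred fun χ : ι → Fin t => P fun x : {x // x ∈ s} => χ ↑x] :
    (univ.filter fun χ : ι → Fin t => P fun x : {x // x ∈ s} => χ ↑x).card
      = (univ.filter P).card * t ^ (Fintype.card ι - s.card) := by
  classical
  rw [← Fintype.card_subtype, ← Fintype.card_subtype]
  have E0 : {χ : ι → Fin t // P fun x : {x // x ∈ s} => χ ↑x}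
      ≃ {g : {x // x ∈ s} → Fin t // P g} × ({x : ι // ¬ x ∈ s} → Fin t) :=
    { toFun := fun χ => (⟨fun x => χ.1 ↑x, χ.2⟩, fun x => χ.1 ↑x)
      invFun := fun gh => ⟨fun x => if hx : x ∈ s then gh.1.1 ⟨x, hx⟩ else gh.2 ⟨x, hx⟩, by
        have : (fun x : {x // x ∈ s} => (if hx : (x : ι) ∈ s then gh.1.1 ⟨x, hx⟩ else gh.2 ⟨x, hx⟩)) = gh.1.1 := by
          funext x
          rw [dif_pos x.2]
        rw [this]
        exact gh.1.2⟩
      left_inv := by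
        intro χ
        apply Subtype.ext
        funext x
        by_cases hx : x ∈ s <;> simp [hx]
      right_inv := by
        intro gh
        refine Prod.ext (Subtype.ext ?_) ?_
        · funext x; simp [x.2]
        · funext x; simp [x.2] }
  rw [Fintype.card_congr E0, Fintype.card_prod, Fintype.card_fun, Fintype.card_subtype_compl,
    Fintype.card_coe, Fintype.card_fin]

/-- There are at least two functions on `s` (of size ≥ 2) with image exactly `j`. -/
lemma image_eq_count (s : Finset ι) (j : Finset (Fin t)) (h : s.card = j.card)
    (h2 : 2 ≤ s.card)
    [DecidablePred fun g : {x // x ∈ s} → Fin t => Finset.univ.image g = j] :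
    2 ≤ (univ.filter fun g : {x // x ∈ s} → Fin t => Finset.univ.image g = j).card := by
  classical
  have hcards : Fintype.card {x // x ∈ s} = Fintype.card {y // y ∈ j} := by
    rw [Fintype.card_coe, Fintype.card_coe, h]
  obtain e1 := Fintype.equivOfCardEq hcards
  set g₀ : {x // x ∈ s} → Fin t := fun x => ↑(e1 x) with hg₀
  have himg : ∀ (π : Equiv.Perm {x // x ∈ s}), Finset.univ.image (g₀ ∘ π) = j := by
    intro π
    ext y
    simp only [Finset.mem_image, Function.comp_apply, Finset.mem_univ, true_and]
    constructor
    · rintro ⟨x, rfl⟩; exact (e1 (π x)).2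
    · intro hy
      exact ⟨π.symm (e1.symm ⟨y, hy⟩), by simp [hg₀]⟩
  obtain ⟨a, b, hab⟩ := Fintype.exists_pair_of_one_lt_card
    (by rw [Fintype.card_coe]; omega : 1 < Fintype.card {x // x ∈ s})
  set g₁ : {x // x ∈ s} → Fin t := g₀ ∘ (Equiv.swap a b) with hg₁
  have hne : g₀ ≠ g₁ := by
    intro hcontra
    have := congrFun hcontra a
    simp only [hg₁, Function.comp_apply, Equiv.swap_apply_left] at this
    have : e1 a = e1 b := Subtype.ext (by simpa [hg₀] using this)
    exact hab (e1.injective this)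
  have hsub : ({g₀, g₁} : Finset ({x // x ∈ s} → Fin t)) ⊆
      univ.filter fun g => Finset.univ.image g = j := by
    intro g hg
    simp only [Finset.mem_insert, Finset.mem_singleton] at hg
    rcases hg with rfl | rfl
    · exact Finset.mem_filter.mpr ⟨Finset.mem_univ _, himg (Equiv.refl _)⟩
    · simp only [Finset.mem_filter, Finset.mem_univ, true_and]
      exact himg (Equiv.swap a b)
  calc 2 = ({g₀, g₁} : Finset _).card := (Finset.card_pair hne).symm
  _ ≤ _ := Finset.card_le_card hsub

/-- Counting functions with all values in `j`. -/
lemma into_count (s : Finset ι) (j : Finset (Fin t))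
    [DecidablePred fun g : {x // x ∈ s} → Fin t => ∀ x, g x ∈ j] :
    (univ.filter fun g : {x // x ∈ s} → Fin t => ∀ x, g x ∈ j).card = j.card ^ s.card := by
  classical
  rw [← Fintype.card_subtype]
  rw [Fintype.card_congr (Equiv.subtypePiEquivPi (p := fun _ y => y ∈ j))]
  rw [Fintype.card_pi]
  simp [Fintype.card_coe]

end Counting

section Helpers
variable {V : Type*} [DecidableEq V]

def liftW (W s : Finset V) : Finset {x // x ∈ W} := s.subtype (· ∈ W)

def imgW {t : ℕ} (W : Finset V) (χ : {x // x ∈ W} → Fin t) (s : Finset V) : Finset (Fin t) :=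
  (liftW W s).image χ

lemma mem_liftW {W s : Finset V} {a : {x // x ∈ W}} : a ∈ liftW W s ↔ ↑a ∈ s :=
  Finset.mem_subtype

lemma liftW_card {W s : Finset V} (h : s ⊆ W) : (liftW W s).card = s.card := by
  rw [liftW, Finset.card_subtype, Finset.filter_true_of_mem (fun x hx => h hx)]

lemma image_eq_image_univ {ι β : Type*} [DecidableEq β] (s : Finset ι) (χ : ι → β) :
    s.image χ = Finset.univ.image (fun x : {y // y ∈ s} => χ ↑x) := by
  ext y
  simp [Finset.mem_image, Subtype.exists]

lemma girthGt_empty {V : Type*} (ℓ : ℕ) : GirthGt (∅ : Finset (Finset V)) ℓ := by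
  rintro p hp2 hpl ⟨v, e, hv, he, hmem, hinc⟩
  exact absurd (hmem 0) (by simp)

lemma exists_extremal (r t ℓ : ℕ) : ∃ J : Finset (Finset (Fin t)),
    (∀ e ∈ J, e.card = r) ∧ GirthGt J ℓ ∧ J.card = exGirth r t ℓ := by
  have hmem : exGirth r t ℓ ∈
      {m | ∃ H : Finset (Finset (Fin t)), (∀ e ∈ H, e.card = r) ∧ GirthGt H ℓ ∧ H.card = m} := by
    apply Nat.sSup_mem
    · exact ⟨0, ∅, by simp, girthGt_empty ℓ, rfl⟩
    · refine ⟨2 ^ t, ?_⟩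
      rintro m ⟨H, -, -, rfl⟩
      calc H.card ≤ Fintype.card (Finset (Fin t)) := Finset.card_le_univ H
      _ = 2 ^ t := by rw [Fintype.card_finset, Fintype.card_fin]
  obtain ⟨J, h1, h2, h3⟩ := hmem
  exact ⟨J, h1, h2, h3⟩

end Helpers

/-- The switching bound: collisions with a fixed edge `f` are rare. -/
lemma switch_bound {V : Type*} [DecidableEq V] {t r : ℕ} (W : Finset V)
    (J : Finset (Finset (Fin t))) (hJu : ∀ j ∈ J, j.card = r) (e f : Finset V) :
    (Finset.univ.filter fun χ : {x // x ∈ W} → Fin t =>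
        imgW W χ e ∈ J ∧ imgW W χ f = imgW W χ e).card * t ^ ((liftW W (f \ e)).card)
      ≤ (Finset.univ.filter fun χ : {x // x ∈ W} → Fin t => imgW W χ e ∈ J).card
          * r ^ ((liftW W (f \ e)).card) := by
  classical
  set s2 := liftW W (f \ e) with hs2
  set A := Finset.univ.filter fun χ : {x // x ∈ W} → Fin t => imgW W χ e ∈ J with hA
  set B := Finset.univ.filter fun χ : {x // x ∈ W} → Fin t =>
    imgW W χ e ∈ J ∧ imgW W χ f = imgW W χ e with hB
  set T := Finset.univ.filter fun y : ({x // x ∈ W} → Fin t) × ({x // x ∈ s2} → Fin t) =>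
    imgW W y.1 e ∈ J ∧ ∀ x, y.2 x ∈ imgW W y.1 e with hT
  set ov : ({x // x ∈ W} → Fin t) → ({x // x ∈ s2} → Fin t) → ({x // x ∈ W} → Fin t) :=
    fun χ u x => if hx : x ∈ s2 then u ⟨x, hx⟩ else χ x with hov
  set Fm : (({x // x ∈ W} → Fin t) × ({x // x ∈ s2} → Fin t)) →
      (({x // x ∈ W} → Fin t) × ({x // x ∈ s2} → Fin t)) :=
    fun q => (ov q.1 q.2, fun x : {x // x ∈ s2} => q.1 ↑x) with hFm
  have hinvol : ∀ q, Fm (Fm q) = q := by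
    rintro ⟨χ, u⟩
    refine Prod.ext ?_ ?_
    · funext x
      simp only [hFm, hov]
      by_cases hx : x ∈ s2 <;> simp [hx]
    · funext x
      simp only [hFm, hov]
      simp [x.2]
  have hovimg : ∀ χ u, imgW W (ov χ u) e = imgW W χ e := by
    intro χ u
    apply Finset.image_congr
    intro x hx
    have hxe : (x : V) ∈ e := mem_liftW.mp (Finset.mem_coe.mp hx)
    have hxs : ¬ x ∈ s2 := by
      intro hc
      exact (Finset.mem_sdiff.mp (mem_liftW.mp hc)).2 hxe
    simp [hov, hxs]
  have hmaps : ∀ q ∈ B ×ˢ (Finset.univ : Finset ({x // x ∈ s2} → Fin t)), Fm q ∈ T := by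
    rintro ⟨χ, u⟩ hq
    have hχB : χ ∈ B := (Finset.mem_product.mp hq).1
    obtain ⟨-, hJ', heq⟩ := Finset.mem_filter.mp hχB
    refine Finset.mem_filter.mpr ⟨Finset.mem_univ _, ?_, ?_⟩
    · show imgW W (ov χ u) e ∈ J
      rw [hovimg]; exact hJ'
    · intro x
      show χ ↑x ∈ imgW W (ov χ u) e
      rw [hovimg, ← heq]
      have hxf : (↑↑x : V) ∈ f := (Finset.mem_sdiff.mp (mem_liftW.mp x.2)).1
      simp only [imgW]
      exact Finset.mem_image.mpr ⟨↑x, mem_liftW.mpr hxf, rfl⟩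
  have hinj : Function.Injective Fm := Function.LeftInverse.injective hinvol
  have hcard1 : B.card * t ^ s2.card = (B ×ˢ (Finset.univ : Finset ({x // x ∈ s2} → Fin t))).card := by
    rw [Finset.card_product, Finset.card_univ, Fintype.card_fun, Fintype.card_coe,
      Fintype.card_fin]
  have hcard2 : (B ×ˢ (Finset.univ : Finset ({x // x ∈ s2} → Fin t))).card ≤ T.card :=
    Finset.card_le_card_of_injOn Fm hmaps hinj.injOn
  have hcard3 : T.card = A.card * r ^ s2.card := by
    rw [Finset.card_eq_sum_card_fiberwise (f := fun y => y.1) (t := A)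
      (fun y hy => Finset.mem_filter.mpr ⟨Finset.mem_univ _, (Finset.mem_filter.mp hy).2.1⟩)]
    rw [Finset.sum_congr rfl (fun ψ hψ => ?_), Finset.sum_const, smul_eq_mul]
    have hψJ : imgW W ψ e ∈ J := (Finset.mem_filter.mp hψ).2
    have himg : T.filter (fun y => y.1 = ψ)
        = (Finset.univ.filter fun h : {x // x ∈ s2} → Fin t =>
            ∀ x, h x ∈ imgW W ψ e).image (fun h => (ψ, h)) := by
      ext y
      simp only [Finset.mem_filter, Finset.mem_image, Finset.mem_univ, true_and, hT]
      constructor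
      · rintro ⟨⟨hJ', hall⟩, h1⟩
        refine ⟨y.2, ?_, ?_⟩
        · rw [← h1]; exact hall
        · exact Prod.ext h1.symm rfl
      · rintro ⟨h, hall, rfl⟩
        exact ⟨⟨hψJ, hall⟩, rfl⟩
    rw [himg, Finset.card_image_of_injective _ (fun h1 h2 hh => (Prod.mk.injEq _ _ _ _).mp hh |>.2),
      into_count s2 (imgW W ψ e), hJu _ hψJ]
  omega

set_option maxHeartbeats 2000000 in
theorem stmt11 {V : Type*} [DecidableEq V] (H : Finset (Finset V)) (ℓ r t : ℕ)
    (hℓ : 3 ≤ ℓ) (hr : 3 ≤ r) (hu : ∀ e ∈ H, e.card = r)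
    -- t ≥ r²·4^r·Δ_i^{1/(r−i)} for every 1 ≤ i ≤ r − 1, where Δ_i is the max i-degree:
    (hdeg : ∀ i : ℕ, 1 ≤ i → i ≤ r - 1 → ∀ S : Finset V, S.card = i →
      (r : ℝ) ^ 2 * 4 ^ r * ({e : Finset V | e ∈ H ∧ S ⊆ e}.ncard : ℝ) ^
        ((1 : ℝ) / ((r : ℝ) - (i : ℝ))) ≤ (t : ℝ)) :
    ∃ H' ⊆ H, GirthGt H' ℓ ∧
      (exGirth r t ℓ : ℝ) * (t : ℝ) ^ (-(r : ℤ)) * (H.card : ℝ) ≤ (H'.card : ℝ) := by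
  classical
  rcases H.eq_empty_or_nonempty with rfl | ⟨e₀, he₀⟩
  · exact ⟨∅, Finset.Subset.refl _, girthGt_empty ℓ, by simp⟩
  set C : ℝ := (r : ℝ) ^ 2 * 4 ^ r with hCdef
  have hCpos : (0:ℝ) < C := by positivity
  -- degree hypothesis in usable form
  have hdeg' : ∀ S : Finset V, 1 ≤ S.card → S.card ≤ r - 1 →
      ((H.filter fun f => S ⊆ f).card : ℝ) ≤ ((t : ℝ) / C) ^ (r - S.card) := by
    intro S h1 h2
    have hset : {e : Finset V | e ∈ H ∧ S ⊆ e} = ↑(H.filter fun f => S ⊆ f) := by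
      ext x; simp
    have hd := hdeg S.card h1 h2 S rfl
    rw [hset, Set.ncard_coe_finset] at hd
    set d : ℝ := ((H.filter fun f => S ⊆ f).card : ℝ) with hdd
    have hd0 : 0 ≤ d := by positivity
    have hm : ((r : ℝ) - (S.card : ℝ)) = ((r - S.card : ℕ) : ℝ) := by
      have hsr : S.card ≤ r := by omega
      push_cast [hsr]; ring
    have hmpos : (0:ℝ) < ((r : ℝ) - (S.card : ℝ)) := by
      rw [hm]
      have : 1 ≤ r - S.card := by omega
      exact_mod_cast this
    have hd2 : d ^ ((1 : ℝ) / ((r : ℝ) - (S.card : ℝ))) ≤ (t : ℝ) / C := by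
      rw [le_div_iff₀ hCpos]
      linarith [hd]
    have hbase0 : 0 ≤ d ^ ((1 : ℝ) / ((r : ℝ) - (S.card : ℝ))) := Real.rpow_nonneg hd0 _
    calc d = (d ^ ((1 : ℝ) / ((r : ℝ) - (S.card : ℝ)))) ^ (r - S.card) := by
            rw [← Real.rpow_natCast (d ^ ((1 : ℝ) / ((r : ℝ) - (S.card : ℝ)))) (r - S.card),
              ← Real.rpow_mul hd0, ← hm, one_div, inv_mul_cancel₀ (ne_of_gt hmpos),
              Real.rpow_one]
      _ ≤ ((t : ℝ) / C) ^ (r - S.card) := pow_le_pow_left₀ hbase0 hd2 _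
  -- t is large
  obtain ⟨v₀, hv₀⟩ := Finset.card_pos.mp (show 0 < e₀.card by rw [hu e₀ he₀]; omega)
  have htC : C ≤ (t : ℝ) := by
    have h1 := hdeg 1 le_rfl (by omega) {v₀} (Finset.card_singleton v₀)
    have hset : {e : Finset V | e ∈ H ∧ {v₀} ⊆ e} = ↑(H.filter fun f => {v₀} ⊆ f) := by
      ext x; simp
    rw [hset, Set.ncard_coe_finset] at h1
    have hmem1 : e₀ ∈ H.filter fun f => {v₀} ⊆ f :=
      Finset.mem_filter.mpr ⟨he₀, Finset.singleton_subset_iff.mpr hv₀⟩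
    have hpos : (1:ℝ) ≤ (((H.filter fun f => {v₀} ⊆ f).card : ℕ) : ℝ) := by
      exact_mod_cast Finset.card_pos.mpr ⟨e₀, hmem1⟩
    have hexp : (0:ℝ) ≤ 1 / ((r:ℝ) - ((1:ℕ):ℝ)) := by
      have h3 : (3:ℝ) ≤ (r:ℝ) := by exact_mod_cast hr
      apply div_nonneg zero_le_one
      push_cast
      linarith
    have hge1 : (1:ℝ) ≤ (((H.filter fun f => {v₀} ⊆ f).card : ℕ) : ℝ) ^ ((1:ℝ) / ((r:ℝ) - ((1:ℕ):ℝ))) := by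
      calc (1:ℝ) = (1:ℝ) ^ ((1:ℝ) / ((r:ℝ) - ((1:ℕ):ℝ))) := (Real.one_rpow _).symm
      _ ≤ _ := Real.rpow_le_rpow zero_le_one hpos hexp
    calc C = C * 1 := (mul_one C).symm
    _ ≤ C * (((H.filter fun f => {v₀} ⊆ f).card : ℕ) : ℝ) ^ ((1:ℝ) / ((r:ℝ) - ((1:ℕ):ℝ))) :=
        mul_le_mul_of_nonneg_left hge1 (le_of_lt hCpos)
    _ ≤ (t : ℝ) := h1
  have ht0 : (0:ℝ) < (t:ℝ) := lt_of_lt_of_le hCpos htC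
  have ht1 : 1 ≤ t := by exact_mod_cast Nat.one_le_iff_ne_zero.mpr (by
    intro h; rw [h] at ht0; simp at ht0)
  -- the host structure
  set W : Finset V := H.biUnion id with hWdef
  have hsubW : ∀ e ∈ H, e ⊆ W := fun e he x hx => Finset.mem_biUnion.mpr ⟨e, he, hx⟩
  obtain ⟨J, hJu, hJg, hJcard⟩ := exists_extremal r t ℓ
  set n := W.card with hn
  have hnr : r ≤ n := by
    rw [← hu e₀ he₀]
    exact Finset.card_le_card (hsubW e₀ he₀)
  have hcardι : Fintype.card {x // x ∈ W} = n := Fintype.card_coe W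
  set keep : ({x // x ∈ W} → Fin t) → Finset V → Prop := fun χ e =>
    imgW W χ e ∈ J ∧ ∀ f ∈ H, f ≠ e → (e ∩ f).Nonempty → imgW W χ f ≠ imgW W χ e with hkeepdef
  -- per-edge bound
  have hGood : ∀ e ∈ H, (J.card : ℝ) * (t:ℝ)^(n - r)
      ≤ ((Finset.univ.filter fun χ : {x // x ∈ W} → Fin t => keep χ e).card : ℝ) := by
    intro e he
    set A := Finset.univ.filter fun χ : {x // x ∈ W} → Fin t => imgW W χ e ∈ J with hA
    have hliftcard : (liftW W e).card = r := by rw [liftW_card (hsubW e he), hu e he]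
    -- lower bound on A
    have hAlow : 2 * J.card * t ^ (n - r) ≤ A.card := by
      have hsplit : A.card = ∑ j ∈ J,
          (A.filter fun χ => imgW W χ e = j).card :=
        Finset.card_eq_sum_card_fiberwise (fun χ hχ => (Finset.mem_filter.mp hχ).2)
      have hterm : ∀ j ∈ J, 2 * t ^ (n - r) ≤ (A.filter fun χ => imgW W χ e = j).card := by
        intro j hj
        have heqA : A.filter (fun χ => imgW W χ e = j)
            = Finset.univ.filter fun χ : {x // x ∈ W} → Fin t => imgW W χ e = j := by
          ext χ
          simp only [hA, Finset.mem_filter, Finset.mem_univ, true_and, and_iff_right_iff_imp]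
          intro hx; rw [hx]; exact hj
        rw [heqA]
        have hconv : (Finset.univ.filter fun χ : {x // x ∈ W} → Fin t => imgW W χ e = j)
            = Finset.univ.filter fun χ : {x // x ∈ W} → Fin t =>
                (fun g : {y // y ∈ liftW W e} → Fin t => Finset.univ.image g = j)
                  (fun x => χ ↑x) := by
          apply Finset.filter_congr
          intro χ _
          simp only [imgW]
          rw [image_eq_image_univ (liftW W e) χ]
        rw [hconv, restrict_count (liftW W e)
          (fun g : {y // y ∈ liftW W e} → Fin t => Finset.univ.image g = j), hcardι, hliftcard]
        apply Nat.mul_le_mul_right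
        exact image_eq_count (liftW W e) j (by rw [hliftcard, hJu j hj]) (by omega)
      calc 2 * J.card * t ^ (n - r) = ∑ _j ∈ J, 2 * t ^ (n-r) := by
            rw [Finset.sum_const, smul_eq_mul]; ring
      _ ≤ ∑ j ∈ J, (A.filter fun χ => imgW W χ e = j).card := Finset.sum_le_sum hterm
      _ = A.card := hsplit.symm
    -- union bound
    set bad := (H.erase e).filter fun f => (e ∩ f).Nonempty with hbad
    set Good := Finset.univ.filter fun χ : {x // x ∈ W} → Fin t => keep χ e with hGoodDef
    set B : Finset V → Finset ({x // x ∈ W} → Fin t) := fun f =>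
      Finset.univ.filter fun χ => imgW W χ e ∈ J ∧ imgW W χ f = imgW W χ e with hBdef
    have hcover : A ⊆ Good ∪ bad.biUnion B := by
      intro χ hχ
      have hχJ : imgW W χ e ∈ J := (Finset.mem_filter.mp hχ).2
      by_cases hk : keep χ e
      · exact Finset.mem_union_left _ (Finset.mem_filter.mpr ⟨Finset.mem_univ _, hk⟩)
      · simp only [hkeepdef, not_and, not_forall] at hk
        obtain ⟨f, hfH, hfne, hfint, hfeq⟩ := hk hχJ
        rw [not_not] at hfeq
        refine Finset.mem_union_right _ (Finset.mem_biUnion.mpr ⟨f, ?_, ?_⟩)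
        · exact Finset.mem_filter.mpr ⟨Finset.mem_erase.mpr ⟨hfne, hfH⟩, hfint⟩
        · exact Finset.mem_filter.mpr ⟨Finset.mem_univ _, hχJ, hfeq⟩
    have hcard1 : (A.card : ℝ) ≤ Good.card + ∑ f ∈ bad, ((B f).card : ℝ) := by
      have h1 : A.card ≤ Good.card + (bad.biUnion B).card := by
        calc A.card ≤ (Good ∪ bad.biUnion B).card := Finset.card_le_card hcover
        _ ≤ _ := Finset.card_union_le _ _
      have h2 : (bad.biUnion B).card ≤ ∑ f ∈ bad, (B f).card := Finset.card_biUnion_le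
      push_cast
      have := le_trans h1 (Nat.add_le_add_left h2 _)
      exact_mod_cast this
    -- bound each B f
    have hBbound : ∀ f ∈ bad, ((B f).card : ℝ) ≤ (A.card : ℝ) * ((r:ℝ)/t) ^ (r - (e ∩ f).card) := by
      intro f hf
      have hfH : f ∈ H := Finset.mem_of_mem_erase (Finset.mem_filter.mp hf).1
      have hfW : f \ e ⊆ W := (Finset.sdiff_subset).trans (hsubW f hfH)
      have hk : (liftW W (f \ e)).card = (f \ e).card := liftW_card hfW
      have hkk : (f \ e).card = r - (e ∩ f).card := by
        have h1 : (f \ e).card + (f ∩ e).card = f.card := Finset.card_sdiff_add_card_inter f e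
        rw [Finset.inter_comm f e] at h1
        have h3 : f.card = r := hu f hfH
        omega
      have hswitch := switch_bound W J hJu e f
      rw [hk, hkk] at hswitch
      have hcast : ((B f).card : ℝ) * (t:ℝ) ^ (r - (e ∩ f).card)
          ≤ (A.card : ℝ) * (r:ℝ) ^ (r - (e ∩ f).card) := by exact_mod_cast hswitch
      have htpow : (0:ℝ) < (t:ℝ) ^ (r - (e ∩ f).card) := by positivity
      rw [div_pow, ← mul_div_assoc, le_div_iff₀ htpow]
      exact hcast
    -- sum the bounds fiberwise over S = e ∩ f
    set P := e.powerset.filter fun S => S.Nonempty ∧ S ≠ e with hP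
    have hmapsP : ∀ f ∈ bad, e ∩ f ∈ P := by
      intro f hf
      obtain ⟨hfe, hfint⟩ := Finset.mem_filter.mp hf
      refine Finset.mem_filter.mpr ⟨Finset.mem_powerset.mpr Finset.inter_subset_left, hfint, ?_⟩
      intro hcontra
      have hef : e ⊆ f := Finset.inter_eq_left.mp hcontra
      have : e = f := Finset.eq_of_subset_of_card_le hef (by rw [hu f (Finset.mem_of_mem_erase hfe), hu e he])
      exact (Finset.mem_erase.mp hfe).1 this.symm
    have hsumB : ∑ f ∈ bad, ((r:ℝ)/t) ^ (r - (e ∩ f).card) ≤ 1/3 := by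
      rw [← Finset.sum_fiberwise_of_maps_to hmapsP (fun f => ((r:ℝ)/t) ^ (r - (e ∩ f).card))]
      have hterm : ∀ S ∈ P, ∑ f ∈ bad.filter (fun f => e ∩ f = S),
          ((r:ℝ)/t) ^ (r - (e ∩ f).card) ≤ (r:ℝ)/C := by
        intro S hS
        obtain ⟨hSpow, hSne, hSneq⟩ := Finset.mem_filter.mp hS
        have hS1 : 1 ≤ S.card := Finset.card_pos.mpr hSne
        have hS2 : S.card ≤ r - 1 := by
          have hlt : S.card < e.card := Finset.card_lt_card
            (Finset.ssubset_iff_subset_ne.mpr ⟨Finset.mem_powerset.mp hSpow, hSneq⟩)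
          rw [hu e he] at hlt
          omega
        have hfiber : (bad.filter (fun f => e ∩ f = S)) ⊆ H.filter fun f => S ⊆ f := by
          intro f hf
          obtain ⟨hf1, hf2⟩ := Finset.mem_filter.mp hf
          refine Finset.mem_filter.mpr ⟨Finset.mem_of_mem_erase (Finset.mem_filter.mp hf1).1, ?_⟩
          rw [← hf2]
          exact Finset.inter_subset_right
        calc ∑ f ∈ bad.filter (fun f => e ∩ f = S), ((r:ℝ)/t) ^ (r - (e ∩ f).card)
            = ∑ f ∈ bad.filter (fun f => e ∩ f = S), ((r:ℝ)/t) ^ (r - S.card) := by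
              apply Finset.sum_congr rfl
              intro f hf
              rw [(Finset.mem_filter.mp hf).2]
        _ = ((bad.filter (fun f => e ∩ f = S)).card : ℝ) * ((r:ℝ)/t) ^ (r - S.card) := by
              rw [Finset.sum_const, nsmul_eq_mul]
        _ ≤ ((t:ℝ)/C) ^ (r - S.card) * ((r:ℝ)/t) ^ (r - S.card) := by
              refine mul_le_mul_of_nonneg_right ?_ (by positivity)
              calc ((bad.filter (fun f => e ∩ f = S)).card : ℝ)
                  ≤ ((H.filter fun f => S ⊆ f).card : ℝ) := by
                    exact_mod_cast Finset.card_le_card hfiber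
              _ ≤ ((t:ℝ)/C) ^ (r - S.card) := hdeg' S hS1 hS2
        _ = ((r:ℝ)/C) ^ (r - S.card) := by
              rw [← mul_pow]
              congr 1
              field_simp
        _ ≤ (r:ℝ)/C := by
              have h0 : (0:ℝ) ≤ (r:ℝ)/C := by positivity
              have h1 : (r:ℝ)/C ≤ 1 := by
                rw [div_le_one hCpos, hCdef]
                nlinarith [show (3:ℝ) ≤ (r:ℝ) by exact_mod_cast hr,
                  show (1:ℝ) ≤ (4:ℝ)^r by exact one_le_pow₀ (by norm_num : (1:ℝ) ≤ 4)]
              have hk1 : r - S.card ≠ 0 := by omega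
              exact pow_le_of_le_one h0 h1 hk1
      calc ∑ S ∈ P, ∑ f ∈ bad.filter (fun f => e ∩ f = S), ((r:ℝ)/t) ^ (r - (e ∩ f).card)
          ≤ ∑ _S ∈ P, (r:ℝ)/C := Finset.sum_le_sum hterm
      _ = (P.card : ℝ) * ((r:ℝ)/C) := by rw [Finset.sum_const, nsmul_eq_mul]
      _ ≤ (2^r : ℝ) * ((r:ℝ)/C) := by
            refine mul_le_mul_of_nonneg_right ?_ (by positivity)
            have : P.card ≤ 2^r := by
              calc P.card ≤ e.powerset.card := Finset.card_le_card (Finset.filter_subset _ _)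
              _ = 2^e.card := Finset.card_powerset e
              _ = 2^r := by rw [hu e he]
            exact_mod_cast this
      _ ≤ 1/3 := by
            rw [hCdef]
            have hnat : 3 * (2^r * r) ≤ r^2 * 4^r := by
              have h4 : (4:ℕ)^r = 2^r * 2^r := by rw [← Nat.mul_pow]
              have h1 : 1 ≤ (2:ℕ)^r := Nat.one_le_two_pow
              calc 3 * (2^r * r) ≤ r * (2^r * r) :=
                    Nat.mul_le_mul_right _ (by omega)
              _ = r ^ 2 * 2^r * 1 := by ring
              _ ≤ r ^ 2 * 2^r * 2^r := Nat.mul_le_mul_left _ h1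
              _ = r^2 * 4^r := by rw [h4]; ring
            have hreal : (3:ℝ) * (2^r * r) ≤ (r:ℝ)^2 * 4^r := by exact_mod_cast hnat
            have hCpos' : (0:ℝ) < (r:ℝ)^2 * 4^r := by positivity
            rw [show (2:ℝ)^r * ((r:ℝ)/((r:ℝ)^2 * 4^r)) = ((2:ℝ)^r * r)/((r:ℝ)^2 * 4^r) by ring,
              div_le_div_iff₀ hCpos' (by norm_num : (0:ℝ) < 3)]
            linarith
    -- combine
    have hAcast : (2:ℝ) * J.card * (t:ℝ) ^ (n - r) ≤ (A.card : ℝ) := by exact_mod_cast hAlow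
    have hsum2 : ∑ f ∈ bad, ((B f).card : ℝ) ≤ (A.card : ℝ) * (1/3) := by
      calc ∑ f ∈ bad, ((B f).card : ℝ)
          ≤ ∑ f ∈ bad, (A.card : ℝ) * ((r:ℝ)/t) ^ (r - (e ∩ f).card) :=
            Finset.sum_le_sum hBbound
      _ = (A.card : ℝ) * ∑ f ∈ bad, ((r:ℝ)/t) ^ (r - (e ∩ f).card) := by
            rw [Finset.mul_sum]
      _ ≤ (A.card : ℝ) * (1/3) :=
            mul_le_mul_of_nonneg_left hsumB (by positivity)
    have : (J.card : ℝ) * (t:ℝ)^(n - r) ≤ (Good.card : ℝ) := by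
      have htp : (0:ℝ) ≤ (J.card : ℝ) * (t:ℝ)^(n-r) := by positivity
      linarith
    exact this
  -- averaging
  haveI : NeZero t := ⟨by omega⟩
  haveI hne : Nonempty ({x // x ∈ W} → Fin t) := inferInstance
  have hswap : ∑ χ ∈ (Finset.univ : Finset ({x // x ∈ W} → Fin t)),
      ((H.filter fun e => keep χ e).card : ℝ)
      = ∑ e ∈ H, ((Finset.univ.filter fun χ : {x // x ∈ W} → Fin t => keep χ e).card : ℝ) := by
    have h1 : ∑ χ ∈ (Finset.univ : Finset ({x // x ∈ W} → Fin t)),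
        ((H.filter fun e => keep χ e).card)
        = ∑ e ∈ H, ((Finset.univ.filter fun χ : {x // x ∈ W} → Fin t => keep χ e).card) := by
      simp_rw [Finset.card_filter]
      rw [Finset.sum_comm]
    exact_mod_cast h1
  have htotal : (H.card : ℝ) * (J.card : ℝ) * (t:ℝ)^(n - r)
      ≤ ∑ χ ∈ (Finset.univ : Finset ({x // x ∈ W} → Fin t)),
        ((H.filter fun e => keep χ e).card : ℝ) := by
    rw [hswap]
    calc (H.card : ℝ) * (J.card : ℝ) * (t:ℝ)^(n - r)
        = ∑ _e ∈ H, (J.card : ℝ) * (t:ℝ)^(n - r) := by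
          rw [Finset.sum_const, nsmul_eq_mul]; ring
    _ ≤ _ := Finset.sum_le_sum hGood
  have hcardPhi : ((Finset.univ : Finset ({x // x ∈ W} → Fin t)).card : ℝ) = (t:ℝ)^n := by
    rw [Finset.card_univ, Fintype.card_fun, hcardι, Fintype.card_fin]
    push_cast
    ring
  set c : ℝ := (H.card : ℝ) * (J.card : ℝ) * ((t:ℝ)^r)⁻¹ with hc
  have hpowsplit : (t:ℝ)^(n - r) * (t:ℝ)^r = (t:ℝ)^n := by
    rw [← pow_add]
    congr 1
    omega
  have hexists : ∃ χ ∈ (Finset.univ : Finset ({x // x ∈ W} → Fin t)),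
      c ≤ ((H.filter fun e => keep χ e).card : ℝ) := by
    apply Finset.exists_le_of_sum_le Finset.univ_nonempty
    rw [Finset.sum_const, nsmul_eq_mul, hcardPhi]
    calc (t:ℝ)^n * c = (H.card : ℝ) * (J.card : ℝ) * ((t:ℝ)^n * ((t:ℝ)^r)⁻¹) := by
          rw [hc]; ring
    _ = (H.card : ℝ) * (J.card : ℝ) * (t:ℝ)^(n - r) := by
          rw [← hpowsplit]
          field_simp
    _ ≤ _ := htotal
  obtain ⟨χ₀, -, hχ₀⟩ := hexists
  refine ⟨H.filter fun e => keep χ₀ e, Finset.filter_subset _ _, ?_, ?_⟩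
  · -- girth of the subhypergraph
    intro p hp2 hpl hcyc
    obtain ⟨v, e, hvinj, heinj, hmem, hinc⟩ := hcyc
    haveI : NeZero p := ⟨by omega⟩
    haveI : Fact (1 < p) := ⟨by omega⟩
    have hmemH : ∀ i, e i ∈ H := fun i => (Finset.mem_filter.mp (hmem i)).1
    have hkeep : ∀ i, keep χ₀ (e i) := fun i => (Finset.mem_filter.mp (hmem i)).2
    have hvW : ∀ i, v i ∈ W := fun i => hsubW _ (hmemH i) (hinc i).1
    set χ' : V → Fin t := fun x => if hx : x ∈ W then χ₀ ⟨x, hx⟩ else ⟨0, by omega⟩ with hχ'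
    have hχ'W : ∀ (x : V) (hx : x ∈ W), χ' x = χ₀ ⟨x, hx⟩ := fun x hx => dif_pos hx
    have hone : (1 : ZMod p) ≠ 0 := one_ne_zero
    apply girth_no_walk hJg p hp2 hpl (fun i => χ' (v ((i : ℕ) : ZMod p)))
      (fun i => imgW W χ₀ (e ((i : ℕ) : ZMod p)))
    have hcast : ∀ i : ℕ, (((i+1 : ℕ)) : ZMod p) = ((i : ℕ) : ZMod p) + 1 := by
      intro i; push_cast; ring
    refine ⟨?_, ?_, ?_⟩
    · show χ' (v ((p : ℕ) : ZMod p)) = χ' (v ((0 : ℕ) : ZMod p))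
      rw [show ((p : ℕ) : ZMod p) = ((0 : ℕ) : ZMod p) by simp [ZMod.natCast_self]]
    · show imgW W χ₀ (e ((p : ℕ) : ZMod p)) = imgW W χ₀ (e ((0 : ℕ) : ZMod p))
      rw [show ((p : ℕ) : ZMod p) = ((0 : ℕ) : ZMod p) by simp [ZMod.natCast_self]]
    intro i hi
    set k : ZMod p := ((i : ℕ) : ZMod p) with hkdef
    have hk1 : (((i+1 : ℕ)) : ZMod p) = k + 1 := hcast i
    have hinjOn : Set.InjOn χ₀ ↑(liftW W (e k)) := by
      apply Finset.card_image_iff.mp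
      have h1 : ((liftW W (e k)).image χ₀).card = r := by
        have := hJu _ (hkeep k).1
        simpa [imgW] using this
      have h2 : (liftW W (e k)).card = r := by
        rw [liftW_card (hsubW _ (hmemH k)), hu _ (hmemH k)]
      omega
    have hkk1 : k ≠ k + 1 := by
      intro hs
      exact hone (by linear_combination -hs)
    refine ⟨(hkeep k).1, ⟨?_, ?_⟩, ?_, ?_⟩
    · show χ' (v k) ∈ imgW W χ₀ (e k)
      rw [hχ'W _ (hvW k)]
      simp only [imgW]
      exact Finset.mem_image.mpr ⟨⟨v k, hvW k⟩, mem_liftW.mpr (hinc k).1, rfl⟩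
    · show χ' (v (((i+1 : ℕ)) : ZMod p)) ∈ imgW W χ₀ (e k)
      rw [hk1, hχ'W _ (hvW (k+1))]
      simp only [imgW]
      exact Finset.mem_image.mpr ⟨⟨v (k+1), hvW (k+1)⟩, mem_liftW.mpr (hinc k).2, rfl⟩
    · show χ' (v k) ≠ χ' (v (((i+1 : ℕ)) : ZMod p))
      rw [hk1, hχ'W _ (hvW k), hχ'W _ (hvW (k+1))]
      intro hx
      have hvv : v k ≠ v (k+1) := fun hs => hkk1 (hvinj hs)
      have hne2 : (⟨v k, hvW k⟩ : {x // x ∈ W}) ≠ ⟨v (k+1), hvW (k+1)⟩ :=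
        fun hs => hvv (congrArg Subtype.val hs)
      exact hne2 (hinjOn (Finset.mem_coe.mpr (mem_liftW.mpr (hinc k).1))
        (Finset.mem_coe.mpr (mem_liftW.mpr (hinc k).2)) hx)
    · show imgW W χ₀ (e k) ≠ imgW W χ₀ (e (((i+1 : ℕ)) : ZMod p))
      rw [hk1]
      have hene : e (k+1) ≠ e k := fun hs => hkk1 (heinj hs).symm
      have hint : (e k ∩ e (k+1)).Nonempty :=
        ⟨v (k+1), Finset.mem_inter.mpr ⟨(hinc k).2, (hinc (k+1)).1⟩⟩
      exact fun hx => (hkeep k).2 (e (k+1)) (hmemH (k+1)) hene hint hx.symm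
  · -- the counting bound
    have hz : (t:ℝ) ^ (-(r : ℤ)) = ((t:ℝ)^r)⁻¹ := by
      rw [zpow_neg, zpow_natCast]
    rw [hz, ← hJcard]
    calc (J.card : ℝ) * ((t:ℝ)^r)⁻¹ * (H.card : ℝ) = c := by rw [hc]; ring
    _ ≤ _ := hχ₀
end

section
/- Let J be a linear triangle-free r-uniform hypergraph (girth greater than 3), let H be any r-uniform hypergraph, and let χ : V(H) → V(J) be a map. Define H'' ⊆ H to consist of those hyperedges e with χ(e) ∈ E(J) and |χ(e)| = r. Then for any Berge triangle e_1, e_2, e_3 in H'', we have χ(e_1) = χ(e_2) = χ(e_3). -/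
theorem stmt12 {V W : Type*} [DecidableEq V] [DecidableEq W]
    (J : Finset (Finset W)) (H : Finset (Finset V)) (r : ℕ) (hr : 3 ≤ r)
    (hJu : ∀ e ∈ J, e.card = r) (hHu : ∀ e ∈ H, e.card = r)
    -- J is linear and triangle-free (girth greater than 3):
    (hlin : ∀ e ∈ J, ∀ f ∈ J, e ≠ f → (e ∩ f).card ≤ 1)
    (htri : ¬ IsBergeCycle J 3)
    (χ : V → W)
    -- a Berge triangle in H'' = {e ∈ H | χ(e) ∈ E(J), |χ(e)| = r}:
    (e₁ e₂ e₃ : Finset V) (v₁ v₂ v₃ : V)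
    (h1 : e₁ ∈ H) (h2 : e₂ ∈ H) (h3 : e₃ ∈ H)
    (hχ1 : e₁.image χ ∈ J ∧ (e₁.image χ).card = r)
    (hχ2 : e₂.image χ ∈ J ∧ (e₂.image χ).card = r)
    (hχ3 : e₃.image χ ∈ J ∧ (e₃.image χ).card = r)
    (hedist : e₁ ≠ e₂ ∧ e₂ ≠ e₃ ∧ e₁ ≠ e₃)
    (hvdist : v₁ ≠ v₂ ∧ v₂ ≠ v₃ ∧ v₁ ≠ v₃)
    (hm1 : v₁ ∈ e₁ ∩ e₂) (hm2 : v₂ ∈ e₂ ∩ e₃) (hm3 : v₃ ∈ e₃ ∩ e₁) :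
    e₁.image χ = e₂.image χ ∧ e₂.image χ = e₃.image χ := by
  obtain ⟨hJ1, hc1⟩ := hχ1
  obtain ⟨hJ2, hc2⟩ := hχ2
  obtain ⟨hJ3, hc3⟩ := hχ3
  obtain ⟨hv12, hv23, hv13⟩ := hvdist
  rw [Finset.mem_inter] at hm1 hm2 hm3
  have inj1 : Set.InjOn χ e₁ := Finset.card_image_iff.mp (hc1.trans (hHu e₁ h1).symm)
  have inj2 : Set.InjOn χ e₂ := Finset.card_image_iff.mp (hc2.trans (hHu e₂ h2).symm)
  have inj3 : Set.InjOn χ e₃ := Finset.card_image_iff.mp (hc3.trans (hHu e₃ h3).symm)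
  have hw12 : χ v₁ ≠ χ v₂ := fun h => hv12 (inj2 hm1.2 hm2.1 h)
  have hw23 : χ v₂ ≠ χ v₃ := fun h => hv23 (inj3 hm2.2 hm3.1 h)
  have hw13 : χ v₁ ≠ χ v₃ := fun h => hv13 (inj1 hm1.1 hm3.2 h)
  have mem11 : χ v₁ ∈ e₁.image χ := Finset.mem_image_of_mem χ hm1.1
  have mem12 : χ v₁ ∈ e₂.image χ := Finset.mem_image_of_mem χ hm1.2
  have mem22 : χ v₂ ∈ e₂.image χ := Finset.mem_image_of_mem χ hm2.1
  have mem23 : χ v₂ ∈ e₃.image χ := Finset.mem_image_of_mem χ hm2.2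
  have mem33 : χ v₃ ∈ e₃.image χ := Finset.mem_image_of_mem χ hm3.1
  have mem31 : χ v₃ ∈ e₁.image χ := Finset.mem_image_of_mem χ hm3.2
  -- key: two of the images being distinct with two common points contradicts linearity
  have key : ∀ f g : Finset W, f ∈ J → g ∈ J → ∀ a b : W, a ≠ b →
      a ∈ f → a ∈ g → b ∈ f → b ∈ g → f = g := by
    intro f g hf hg a b hab haf hag hbf hbg
    by_contra hne
    have h2le : 2 ≤ (f ∩ g).card := by
      have : ({a, b} : Finset W) ⊆ f ∩ g := by
        intro x hx
        rw [Finset.mem_insert, Finset.mem_singleton] at hx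
        rcases hx with rfl | rfl <;> simp [Finset.mem_inter, *]
      calc 2 = ({a, b} : Finset W).card := (Finset.card_pair hab).symm
        _ ≤ (f ∩ g).card := Finset.card_le_card this
    exact absurd (hlin f hf g hg hne) (by omega)
  by_cases h12 : e₁.image χ = e₂.image χ
  · refine ⟨h12, ?_⟩
    exact key _ _ hJ2 hJ3 _ _ hw23 mem22 mem23 (h12 ▸ mem31) mem33
  · by_cases h23 : e₂.image χ = e₃.image χ
    · exact absurd (key _ _ hJ1 hJ2 _ _ hw13 mem11 mem12 mem31 (h23.symm ▸ mem33)) h12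
    · by_cases h13 : e₁.image χ = e₃.image χ
      · exact absurd (key _ _ hJ1 hJ2 _ _ hw12 mem11 mem12 (h13.symm ▸ mem23) mem22) h12
      · exfalso
        apply htri
        have hcases : ∀ i : ZMod 3, i = 0 ∨ i = 1 ∨ i = 2 := by decide
        have z10 : (1:ZMod 3) ≠ 0 := by decide
        have z20 : (2:ZMod 3) ≠ 0 := by decide
        have z21 : (2:ZMod 3) ≠ 1 := by decide
        have a01 : (0:ZMod 3) + 1 = 1 := by decide
        have a12 : (1:ZMod 3) + 1 = 2 := by decide
        have a20 : (2:ZMod 3) + 1 = 0 := by decide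
        have hw21 := hw12.symm
        have hw32 := hw23.symm
        have hw31 := hw13.symm
        have h21 : e₂.image χ ≠ e₁.image χ := Ne.symm h12
        have h32 : e₃.image χ ≠ e₂.image χ := Ne.symm h23
        have h31 : e₃.image χ ≠ e₁.image χ := Ne.symm h13
        refine ⟨fun i => if i = 0 then χ v₁ else if i = 1 then χ v₂ else χ v₃,
          fun i => if i = 0 then e₂.image χ else if i = 1 then e₃.image χ else e₁.image χ,
          ?_, ?_, ?_, ?_⟩
        · intro i j h
          rcases hcases i with rfl|rfl|rfl <;> rcases hcases j with rfl|rfl|rfl <;>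
            simp only [if_pos rfl, if_neg z10, if_neg z20, if_neg z21] at h <;>
            first
              | rfl
              | exact absurd h hw12 | exact absurd h hw21
              | exact absurd h hw23 | exact absurd h hw32
              | exact absurd h hw13 | exact absurd h hw31
        · intro i j h
          rcases hcases i with rfl|rfl|rfl <;> rcases hcases j with rfl|rfl|rfl <;>
            simp only [if_pos rfl, if_neg z10, if_neg z20, if_neg z21] at h <;>
            first
              | rfl
              | exact absurd h h12 | exact absurd h h21
              | exact absurd h h23 | exact absurd h h32
              | exact absurd h h13 | exact absurd h h31
        · intro i
          rcases hcases i with rfl|rfl|rfl <;>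
            simp only [if_pos rfl, if_neg z10, if_neg z20, if_neg z21] <;>
            first | exact hJ1 | exact hJ2 | exact hJ3
        · intro i
          rcases hcases i with rfl|rfl|rfl
          · rw [a01]
            simp only [if_pos rfl, if_neg z10, if_neg z20, if_neg z21]
            exact ⟨mem12, mem22⟩
          · rw [a12]
            simp only [if_pos rfl, if_neg z10, if_neg z20, if_neg z21]
            exact ⟨mem23, mem33⟩
          · rw [a20]
            simp only [if_pos rfl, if_neg z10, if_neg z20, if_neg z21]
            exact ⟨mem31, mem11⟩
end

section
/- Let ℓ ≥ 3, r ≥ 2, and suppose that every r-graph H of girth greater than ℓ is uniquely determined by its 2-shadow among r-graphs of girth greater than ℓ. More concretely: if H₁ and H₂ are r-uniform hypergraphs on [n], both of girth greater than ℓ ≥ 3, and ∂²H₁ = ∂²H₂, then H₁ = H₂. -/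
/-- The 2-shadow of `H`: all pairs of vertices lying in a common hyperedge. -/
def shadow2 {V : Type*} (H : Finset (Finset V)) : Set (Finset V) :=
  {s | s.card = 2 ∧ ∃ e ∈ H, s ⊆ e}

/-- No two distinct edges share two vertices, if girth > 2. -/
lemma unique_edge {V : Type*} {H : Finset (Finset V)} {ℓ : ℕ} (hℓ : 3 ≤ ℓ)
    (hg : GirthGt H ℓ) {a b : V} (hab : a ≠ b) {f g : Finset V}
    (hf : f ∈ H) (hg' : g ∈ H)
    (haf : a ∈ f) (hbf : b ∈ f) (hag : a ∈ g) (hbg : b ∈ g) : f = g := by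
  by_contra hne
  apply hg 2 le_rfl (by omega)
  refine ⟨![a, b], ![f, g], ?_, ?_, ?_, ?_⟩
  · intro i j h
    fin_cases i <;> fin_cases j <;> simp_all <;> rfl
  · intro i j h
    fin_cases i <;> fin_cases j <;> simp_all <;> rfl
  · intro i; fin_cases i <;> simp_all
  · intro i; fin_cases i <;>
      simp_all [show (1 + 1 : ZMod 2) = 0 from rfl, show ((0:ZMod 2) + 1) = 1 from rfl] <;> assumption

/-- If girth > 3, edges covering the three pairs of a triangle coincide. -/
lemma tri_edge {V : Type*} {H : Finset (Finset V)} {ℓ : ℕ} (hℓ : 3 ≤ ℓ)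
    (hg : GirthGt H ℓ) {a b c : V} (hab : a ≠ b) (hac : a ≠ c) (hbc : b ≠ c)
    {f₁ f₂ f₃ : Finset V} (hf₁ : f₁ ∈ H) (hf₂ : f₂ ∈ H) (hf₃ : f₃ ∈ H)
    (h1a : a ∈ f₁) (h1b : b ∈ f₁) (h2a : a ∈ f₂) (h2c : c ∈ f₂)
    (h3b : b ∈ f₃) (h3c : c ∈ f₃) : f₁ = f₂ := by
  by_contra hne
  have h13 : f₁ ≠ f₃ := by
    rintro rfl
    exact hne (unique_edge hℓ hg hac hf₁ hf₂ h1a h3c h2a h2c)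
  have h23 : f₂ ≠ f₃ := by
    rintro rfl
    exact hne (unique_edge hℓ hg hab hf₁ hf₂ h1a h1b h2a h3b)
  apply hg 3 (by omega) hℓ
  refine ⟨![a, b, c], ![f₁, f₃, f₂], ?_, ?_, ?_, ?_⟩
  · intro i j h
    fin_cases i <;> fin_cases j <;> simp_all <;> rfl
  · intro i j h
    fin_cases i <;> fin_cases j <;> simp_all <;> rfl
  · intro i; fin_cases i <;> simp_all
  · intro i; fin_cases i <;>
      simp_all [show ((0:ZMod 3) + 1) = 1 from rfl, show ((1:ZMod 3) + 1) = 2 from rfl,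
        show ((2:ZMod 3) + 1) = 0 from rfl] <;> assumption

lemma subset_of_shadow_subset {n r ℓ : ℕ} (hr : 2 ≤ r) (hℓ : 3 ≤ ℓ)
    {H₁ H₂ : Finset (Finset (Fin n))}
    (h1u : ∀ e ∈ H₁, e.card = r) (h2u : ∀ e ∈ H₂, e.card = r)
    (h2g : GirthGt H₂ ℓ)
    (hsh : shadow2 H₁ ⊆ shadow2 H₂) : H₁ ⊆ H₂ := by
  intro e he
  have hcard : e.card = r := h1u e he
  -- pairs of e are in shadow2 H₂
  have hpair : ∀ x ∈ e, ∀ y ∈ e, x ≠ y → ∃ f ∈ H₂, x ∈ f ∧ y ∈ f := by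
    intro x hx y hy hxy
    have : ({x, y} : Finset (Fin n)) ∈ shadow2 H₂ := by
      apply hsh
      exact ⟨Finset.card_pair hxy, e, he, by
        intro z hz; simp at hz; rcases hz with rfl | rfl <;> assumption⟩
    obtain ⟨_, f, hf, hsub⟩ := this
    exact ⟨f, hf, hsub (by simp), hsub (by simp)⟩
  -- pick two distinct vertices of e
  obtain ⟨a, ha, b, hb, hab⟩ : ∃ a ∈ e, ∃ b ∈ e, a ≠ b := by
    have : 1 < e.card := by omega
    exact Finset.one_lt_card.mp this
  obtain ⟨f, hf, haf, hbf⟩ := hpair a ha b hb hab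
  have hsub : e ⊆ f := by
    intro c hc
    by_cases hca : c = a
    · subst hca; exact haf
    by_cases hcb : c = b
    · subst hcb; exact hbf
    obtain ⟨f₂, hf₂, haf₂, hcf₂⟩ := hpair a ha c hc (Ne.symm hca)
    obtain ⟨f₃, hf₃, hbf₃, hcf₃⟩ := hpair b hb c hc (Ne.symm hcb)
    have := tri_edge hℓ h2g hab (Ne.symm hca) (Ne.symm hcb) hf hf₂ hf₃
      haf hbf haf₂ hcf₂ hbf₃ hcf₃
    rw [this]; exact hcf₂
  have : e = f := Finset.eq_of_subset_of_card_le hsub (by rw [hcard, h2u f hf])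
  rwa [this]

theorem stmt13 (n r ℓ : ℕ) (hr : 2 ≤ r) (hℓ : 3 ≤ ℓ)
    (H₁ H₂ : Finset (Finset (Fin n)))
    (h1u : ∀ e ∈ H₁, e.card = r) (h2u : ∀ e ∈ H₂, e.card = r)
    (h1g : GirthGt H₁ ℓ) (h2g : GirthGt H₂ ℓ)
    (hsh : shadow2 H₁ = shadow2 H₂) : H₁ = H₂ :=
  Finset.Subset.antisymm
    (subset_of_shadow_subset hr hℓ h1u h2u h2g hsh.le)
    (subset_of_shadow_subset hr hℓ h2u h1u h1g hsh.ge)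
end

section
/- Let H be an r-uniform hypergraph of girth greater than ℓ ≥ 3 on [n]. Fix 1 ≤ j < j' ≤ r and define φ(e) = {v_j, v_{j'}} for each hyperedge e = {v_1 < ... < v_r}, and let G = φ(H) be the graph with edges {φ(e) : e ∈ E(H)}. Then G contains no cycle of length at most ℓ. -/
/-- If `H` is `r`-uniform on `[n]` of girth `> ℓ ≥ 3` and `φ e` picks the `j`-th and
`j'`-th smallest vertices of each hyperedge, then the graph `G = φ(H)` contains no
cycle of length at most `ℓ`. -/
theorem stmt15 {V : Type*} [LinearOrder V] (H : Finset (Finset V)) (r ℓ : ℕ)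
    (hℓ : 3 ≤ ℓ) (hu : ∀ e ∈ H, e.card = r)
    (hg : GirthGt H ℓ)
    (j j' : ℕ) (h1j : 1 ≤ j) (hjj : j < j') (hj'r : j' ≤ r)
    (φ : Finset V → Finset V)
    (hφ : ∀ e ∈ H, ∀ (h1 : j - 1 < (e.sort (· ≤ ·)).length)
        (h2 : j' - 1 < (e.sort (· ≤ ·)).length),
        φ e = {(e.sort (· ≤ ·)).get ⟨j - 1, h1⟩, (e.sort (· ≤ ·)).get ⟨j' - 1, h2⟩}) :
    ∀ p, 3 ≤ p → p ≤ ℓ →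
      ¬ ∃ v : ZMod p → V, Function.Injective v ∧
          ∀ i : ZMod p, ({v i, v (i + 1)} : Finset V) ∈ H.image φ := by
  intro p hp3 hpl
  rintro ⟨v, hvinj, hedge⟩
  have hchoice : ∀ i : ZMod p, ∃ f, f ∈ H ∧ φ f = {v i, v (i + 1)} := by
    intro i
    rcases Finset.mem_image.mp (hedge i) with ⟨f, hf, hφf⟩
    exact ⟨f, hf, hφf⟩
  choose e heH hφe using hchoice
  have hsub : ∀ f ∈ H, φ f ⊆ f := by
    intro f hf
    have hlen : (f.sort (· ≤ ·)).length = r := by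
      rw [Finset.length_sort, hu f hf]
    have h1 : j - 1 < (f.sort (· ≤ ·)).length := by omega
    have h2 : j' - 1 < (f.sort (· ≤ ·)).length := by omega
    rw [hφ f hf h1 h2]
    intro x hx
    simp only [Finset.mem_insert, Finset.mem_singleton] at hx
    rcases hx with h | h
    · subst h; exact (Finset.mem_sort _).mp (List.get_mem _ _)
    · subst h; exact (Finset.mem_sort _).mp (List.get_mem _ _)
  have h2ne : (2 : ZMod p) ≠ 0 := by
    have hnz : NeZero p := ⟨by omega⟩
    intro h
    have hdvd : (p : ℕ) ∣ 2 :=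
      (ZMod.natCast_eq_zero_iff 2 p).mp (by exact_mod_cast h)
    have := Nat.le_of_dvd (by norm_num) hdvd
    omega
  apply hg p (by omega) hpl
  refine ⟨v, e, hvinj, ?_, heH, ?_⟩
  · intro i i' hii
    have hpair : ({v i, v (i + 1)} : Finset V) = {v i', v (i' + 1)} := by
      rw [← hφe i, ← hφe i', hii]
    have hm : v i ∈ ({v i', v (i' + 1)} : Finset V) := by
      rw [← hpair]; simp
    simp only [Finset.mem_insert, Finset.mem_singleton] at hm
    rcases hm with h | h
    · exact hvinj h
    · exfalso
      have hi : i = i' + 1 := hvinj h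
      have hm2 : v (i + 1) ∈ ({v i', v (i' + 1)} : Finset V) := by
        rw [← hpair]; simp
      simp only [Finset.mem_insert, Finset.mem_singleton] at hm2
      rcases hm2 with h2 | h2
      · have hi2 : i + 1 = i' := hvinj h2
        exact h2ne (by linear_combination hi2 - hi)
      · have hii' : i = i' := add_right_cancel (hvinj h2)
        rw [hii'] at hi
        have h10 : (1 : ZMod p) = 0 := by linear_combination -hi
        exact h2ne (by linear_combination 2 * h10)
  · intro i
    have h := hφe i
    constructor
    · apply hsub (e i) (heH i); rw [h]; simp
    · apply hsub (e i) (heH i); rw [h]; simp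
end

section
/- Let ℓ ≥ 3, k = ⌊ℓ/2⌋, and suppose for k ≥ 2 and every admissible integer t (with t ≤ n^{(k−1)²/(k(2k−1))}/(log n)^{k−1}) that N_m^2(n, C_{2k}) ≤ exp(C·t^{−1/(k−1)}·n^{1+1/k}·log t)·(e·t·n^{1+1/k}/m)^m. Then taking t = (n^{1+1/k}·log n / m)^{k−1}, which is admissible when m ≥ n^{1+1/(2k−1)}(log n)², one obtains a constant c = c(ℓ) such that N_m^2(n, C_{[ℓ]}) ≤ e^{cm}·(log n)^{(k−1)m}·(n^{1+1/k}/m)^{km} for all sufficiently large n. -/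
open Real Filter Asymptotics

/-- `N_m^2(n, C_{2k})`: the number of graphs on `[n]` with exactly `m` edges and no cycle
of length `2k`. -/
noncomputable def NC (n m p : ℕ) : ℕ :=
  {G : Finset (Finset (Fin n)) | (∀ e ∈ G, e.card = 2) ∧ G.card = m ∧ ¬ IsBergeCycle G p}.ncard

/-- `N_m^2(n, C_{[ℓ]})`: the number of graphs on `[n]` with exactly `m` edges and no cycle
of length at most `ℓ`. -/
noncomputable def Ngirth2 (n m ℓ : ℕ) : ℕ :=
  {G : Finset (Finset (Fin n)) | (∀ e ∈ G, e.card = 2) ∧ G.card = m ∧ GirthGt G ℓ}.ncard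

private lemma ngirth_le_nc (n m ℓ k : ℕ) (hk2 : 2 ≤ k) (hkl : 2 * k ≤ ℓ) :
    Ngirth2 n m ℓ ≤ NC n m (2 * k) := by
  apply Set.ncard_le_ncard _ (Set.toFinite _)
  rintro G ⟨h1, h2, h3⟩
  exact ⟨h1, h2, h3 (2 * k) (by omega) hkl⟩

private lemma ev_log_ge (r : ℝ) : ∀ᶠ n : ℕ in atTop, r ≤ Real.log n :=
  (Real.tendsto_log_atTop.comp tendsto_natCast_atTop_atTop).eventually_ge_atTop r

private lemma ev_log_le_rpow {r : ℝ} (hr : 0 < r) :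
    ∀ᶠ n : ℕ in atTop, Real.log n ≤ (n : ℝ) ^ r := by
  have h := (isLittleO_log_rpow_atTop hr).bound one_pos
  have h2 := (tendsto_natCast_atTop_atTop (R := ℝ)).eventually h
  filter_upwards [h2] with n hn
  calc Real.log n ≤ ‖Real.log n‖ := le_norm_self _
  _ ≤ 1 * ‖(n:ℝ)^r‖ := hn
  _ = (n:ℝ)^r := by rw [one_mul, Real.norm_eq_abs, abs_of_nonneg (rpow_nonneg (Nat.cast_nonneg n) r)]

set_option maxHeartbeats 1000000 in
/-- Given the Morris–Saxton container theorem for `C_{2k}`-free graphs (`k = ⌊ℓ/2⌋ ≥ 2`),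
taking `t = (n^{1+1/k}·log n/m)^{k−1}` yields: there is `c = c(ℓ)` such that for all
sufficiently large `n` and all `m ≥ n^{1+1/(2k−1)}(log n)²`,
`N_m^2(n, C_{[ℓ]}) ≤ e^{cm}·(log n)^{(k−1)m}·(n^{1+1/k}/m)^{km}`. -/
theorem stmt19 (ℓ k : ℕ) (hℓ : 4 ≤ ℓ) (hk : k = ℓ / 2) (C : ℝ)
    (hcont : ∀ n m t : ℕ, 2 ≤ t →
      (t : ℝ) ≤ (n : ℝ) ^ (((k : ℝ) - 1) ^ 2 / ((k : ℝ) * (2 * (k : ℝ) - 1))) /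
          (Real.log n) ^ (k - 1) →
      (NC n m (2 * k) : ℝ) ≤
        Real.exp (C * (t : ℝ) ^ (-(1 : ℝ) / ((k : ℝ) - 1)) *
            (n : ℝ) ^ ((1 : ℝ) + 1 / (k : ℝ)) * Real.log t) *
          (Real.exp 1 * (t : ℝ) * (n : ℝ) ^ ((1 : ℝ) + 1 / (k : ℝ)) / (m : ℝ)) ^ m) :
    ∃ c : ℝ, ∃ N₀ : ℕ, ∀ n : ℕ, N₀ ≤ n → ∀ m : ℕ,
      (n : ℝ) ^ ((1 : ℝ) + 1 / (2 * (k : ℝ) - 1)) * (Real.log n) ^ 2 ≤ (m : ℝ) →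
      (Ngirth2 n m ℓ : ℝ) ≤
        Real.exp (c * m) * (Real.log n) ^ ((k - 1) * m) *
          ((n : ℝ) ^ ((1 : ℝ) + 1 / (k : ℝ)) / (m : ℝ)) ^ (k * m) := by
  have hk2 : 2 ≤ k := by omega
  have hkl : 2 * k ≤ ℓ := by omega
  have hK2 : (2:ℝ) ≤ (k:ℝ) := by exact_mod_cast hk2
  set K : ℝ := (k:ℝ) with hKdef
  have hK1 : (1:ℝ) ≤ K - 1 := by linarith
  have hK1' : K - 1 ≠ 0 := by linarith
  have hKne : K ≠ 0 := by linarith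
  have h2K : (3:ℝ) ≤ 2*K - 1 := by linarith
  have h2Kne : 2*K - 1 ≠ 0 := by linarith
  have hkcast : ((k - 1 : ℕ) : ℝ) = K - 1 := by
    push_cast [Nat.cast_sub (by omega : 1 ≤ k)]; ring
  set α : ℝ := (K - 1)^2 / (K * (2*K - 1)) with hαdef
  have hα : 0 < α := div_pos (by nlinarith) (by nlinarith)
  set β : ℝ := (K - 1) / (K * (2*K - 1)) with hβdef
  have hβpos : 0 < β := div_pos (by linarith) (by nlinarith)
  have hβ1 : β ≤ 1 := by
    rw [hβdef, div_le_one (by nlinarith)]; nlinarith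
  have hβα : β * (K - 1) = α := by rw [hβdef, hαdef]; field_simp
  set a : ℝ := (1:ℝ) + 1/K with hadef
  set b : ℝ := (1:ℝ) + 1/(2*K - 1) with hbdef
  have hab : a - b = β := by rw [hadef, hbdef, hβdef, add_sub_add_left_eq_sub, div_sub_div _ _ hKne h2Kne]; ring
  clear_value K α β a b
  refine ⟨2*(K-1)*|C| + 1, ?_⟩
  have hr : 0 < α / (2 * (K - 1)) := by positivity
  have hev : ∀ᶠ n : ℕ in atTop,
      ∀ m : ℕ, (n : ℝ) ^ b * (Real.log n) ^ 2 ≤ (m : ℝ) →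
      (Ngirth2 n m ℓ : ℝ) ≤
        Real.exp ((2*(K-1)*|C| + 1) * m) * (Real.log n) ^ ((k - 1) * m) *
          ((n : ℝ) ^ a / (m : ℝ)) ^ (k * m) := by
    filter_upwards [eventually_ge_atTop 3, ev_log_ge 1, ev_log_ge (12 * Real.exp 3),
      ev_log_ge (3*|C| + 3), ev_log_ge (2/α), ev_log_le_rpow hr] with n hn3 hlog1
      hlogB hlogC hlogα hlogpow m hm
    have hn0 : (0:ℝ) < n := by positivity
    have hn1 : (1:ℝ) ≤ n := by exact_mod_cast (by omega : 1 ≤ n)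
    have hlogpos : (0:ℝ) < Real.log n := by linarith
    have hna : (0:ℝ) < (n:ℝ) ^ a := rpow_pos_of_pos hn0 a
    have hnb : (0:ℝ) < (n:ℝ) ^ b := rpow_pos_of_pos hn0 b
    have hm1 : (1:ℝ) ≤ (m:ℝ) := by
      have h1 : (1:ℝ) ≤ (n:ℝ) ^ b := Real.one_le_rpow hn1 (by rw [hbdef]; positivity)
      nlinarith
    have hm0 : (0:ℝ) < m := by linarith
    have hmne : (m:ℝ) ≠ 0 := ne_of_gt hm0
    set x : ℝ := (n:ℝ) ^ a * Real.log n / m with hxdef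
    clear_value x
    have hx0 : (0:ℝ) ≤ x := by
      rw [hxdef]; exact div_nonneg (mul_nonneg hna.le hlogpos.le) hm0.le
    have hxβ : x ≤ (n:ℝ) ^ β / Real.log n := by
      have h1 : x ≤ (n:ℝ) ^ a * Real.log n / ((n:ℝ) ^ b * (Real.log n)^2) := by
        rw [hxdef]
        gcongr
        all_goals first
          | exact mul_pos hnb (pow_pos hlogpos 2)
          | exact hm
          | positivity
      have h2 : (n:ℝ) ^ a * Real.log n / ((n:ℝ) ^ b * (Real.log n)^2)
          = (n:ℝ) ^ β / Real.log n := by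
        rw [← hab, Real.rpow_sub hn0]
        field_simp
      linarith [h2 ▸ h1]
    have hxn : x ≤ (n:ℝ) := by
      calc x ≤ (n:ℝ) ^ β / Real.log n := hxβ
      _ ≤ (n:ℝ) ^ β / 1 := by gcongr
      _ = (n:ℝ) ^ β := div_one _
      _ ≤ (n:ℝ) ^ (1:ℝ) := Real.rpow_le_rpow_of_exponent_le hn1 hβ1
      _ = (n:ℝ) := Real.rpow_one _
    have hRHS0 : (0:ℝ) ≤ Real.exp ((2*(K-1)*|C| + 1) * m) * (Real.log n) ^ ((k - 1) * m) *
          ((n : ℝ) ^ a / (m : ℝ)) ^ (k * m) := by positivity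
    by_cases hx3 : (3:ℝ) ≤ x ^ (k - 1)
    · -- main regime: t = ⌊x^(k-1)⌋
      set t : ℕ := ⌊x ^ (k-1)⌋₊ with htdef
      clear_value t
      have ht3 : 3 ≤ t := by rw [htdef]; exact Nat.le_floor (by exact_mod_cast hx3)
      have ht2 : 2 ≤ t := by omega
      have ht_le : (t:ℝ) ≤ x ^ (k-1) := by
        rw [htdef]; exact Nat.floor_le (by positivity)
      have ht_gt : x ^ (k-1) - 1 < (t:ℝ) := by
        rw [htdef]; exact Nat.sub_one_lt_floor _
      have ht_ge : x ^ (k-1) / 2 ≤ (t:ℝ) := by linarith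
      have htpos : (0:ℝ) < t := by
        have h3 : (3:ℝ) ≤ t := by exact_mod_cast ht3
        linarith
      have ht1 : (1:ℝ) ≤ t := by linarith
      have hxpos : (0:ℝ) < x := by
        rcases hx0.eq_or_lt with h | h
        · exfalso; rw [← h, zero_pow (by omega : k - 1 ≠ 0)] at hx3; linarith
        · exact h
      have hadm : (t:ℝ) ≤ (n : ℝ) ^ α / (Real.log n) ^ (k - 1) := by
        calc (t:ℝ) ≤ x ^ (k-1) := ht_le
        _ ≤ ((n:ℝ) ^ β / Real.log n) ^ (k-1) := by gcongr
        _ = (n:ℝ) ^ α / (Real.log n) ^ (k-1) := by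
            rw [div_pow, ← Real.rpow_natCast ((n:ℝ) ^ β) (k-1), ← Real.rpow_mul hn0.le,
              hkcast, hβα]
      have hbound := hcont n m t ht2 hadm
      have hxna : x = ((n:ℝ)^a / m) * Real.log n := by rw [hxdef]; ring
      have hid : x ^ (k-1) * ((n:ℝ)^a / m) = (Real.log n)^(k-1) * ((n:ℝ)^a/m)^k := by
        have hsplit : ((n:ℝ)^a/m)^k = ((n:ℝ)^a/m)^(k-1) * ((n:ℝ)^a/m) := by
          conv_lhs => rw [show k = (k-1) + 1 by omega]
          rw [pow_succ]
        rw [hxna, mul_pow, hsplit]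
        ring
      have hedge : Real.exp 1 * (t : ℝ) * (n : ℝ) ^ a / (m : ℝ)
          ≤ Real.exp 1 * ((Real.log n)^(k-1) * ((n:ℝ)^a/m)^k) := by
        rw [← hid]
        calc Real.exp 1 * (t : ℝ) * (n : ℝ) ^ a / (m : ℝ)
            = Real.exp 1 * ((t:ℝ) * ((n:ℝ)^a / m)) := by ring
        _ ≤ Real.exp 1 * (x ^ (k-1) * ((n:ℝ)^a / m)) := by gcongr
      have hlogt0 : (0:ℝ) ≤ Real.log t := Real.log_nonneg ht1
      have htr0 : (0:ℝ) < (t:ℝ) ^ (-(1 : ℝ) / (K - 1)) := rpow_pos_of_pos htpos _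
      have hroot : x / 2 ≤ (t:ℝ) ^ ((1:ℝ) / (K - 1)) := by
        have h1 : (x ^ (k-1) / 2) ^ ((1:ℝ)/(K-1)) ≤ (t:ℝ) ^ ((1:ℝ)/(K-1)) :=
          Real.rpow_le_rpow (by positivity) ht_ge (by positivity)
        have h2 : (x ^ (k-1) / 2) ^ ((1:ℝ)/(K-1)) = x / 2 ^ ((1:ℝ)/(K-1)) := by
          rw [Real.div_rpow (by positivity) (by norm_num), ← Real.rpow_natCast x (k-1),
            ← Real.rpow_mul hxpos.le, hkcast, mul_one_div, div_self hK1', Real.rpow_one]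
        have h3 : (2:ℝ) ^ ((1:ℝ)/(K-1)) ≤ 2 := by
          calc (2:ℝ) ^ ((1:ℝ)/(K-1)) ≤ (2:ℝ) ^ (1:ℝ) := by
                apply Real.rpow_le_rpow_of_exponent_le (by norm_num)
                rw [div_le_one (by linarith)]; linarith
          _ = 2 := Real.rpow_one 2
        have h4 : x / 2 ≤ x / (2:ℝ) ^ ((1:ℝ)/(K-1)) := by gcongr
        linarith [h2 ▸ h1]
      have hinv : (t:ℝ) ^ (-(1 : ℝ) / (K - 1)) ≤ 2 / x := by
        rw [neg_div, Real.rpow_neg htpos.le]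
        have h5 : ((t:ℝ) ^ ((1:ℝ)/(K-1)))⁻¹ ≤ (x/2)⁻¹ := by gcongr
        rw [inv_div] at h5
        exact h5
      have hlogt : Real.log t ≤ (K-1) * Real.log n := by
        calc Real.log t ≤ Real.log (x ^ (k-1)) := Real.log_le_log htpos ht_le
        _ = (k-1 : ℕ) * Real.log x := Real.log_pow _ _
        _ ≤ (k-1 : ℕ) * Real.log n := by gcongr
        _ = (K-1) * Real.log n := by rw [hkcast]
      have hP : (t:ℝ) ^ (-(1 : ℝ) / (K - 1)) * (n:ℝ)^a * Real.log t ≤ 2*(K-1)*m := by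
        have h1 : (t:ℝ) ^ (-(1 : ℝ) / (K - 1)) * (n:ℝ)^a * Real.log t
            ≤ (2/x) * (n:ℝ)^a * ((K-1) * Real.log n) := by
          apply mul_le_mul _ hlogt hlogt0 (by positivity)
          exact mul_le_mul_of_nonneg_right hinv hna.le
        have h2 : (2/x) * (n:ℝ)^a * ((K-1) * Real.log n) = 2*(K-1)*m := by
          rw [hxdef]
          field_simp
        linarith
      have hexp : C * (t : ℝ) ^ (-(1 : ℝ) / (K - 1)) * (n : ℝ) ^ a * Real.log t
          ≤ 2*(K-1)*|C| * m := by
        have hPn : (0:ℝ) ≤ (t:ℝ) ^ (-(1 : ℝ) / (K - 1)) * (n:ℝ)^a * Real.log t :=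
          mul_nonneg (mul_nonneg htr0.le hna.le) hlogt0
        calc C * (t : ℝ) ^ (-(1 : ℝ) / (K - 1)) * (n : ℝ) ^ a * Real.log t
            = C * ((t:ℝ) ^ (-(1 : ℝ) / (K - 1)) * (n:ℝ)^a * Real.log t) := by ring
        _ ≤ |C| * ((t:ℝ) ^ (-(1 : ℝ) / (K - 1)) * (n:ℝ)^a * Real.log t) :=
            mul_le_mul_of_nonneg_right (le_abs_self C) hPn
        _ ≤ |C| * (2*(K-1)*m) := mul_le_mul_of_nonneg_left hP (abs_nonneg C)
        _ = 2*(K-1)*|C| * m := by ring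
      calc (Ngirth2 n m ℓ : ℝ) ≤ (NC n m (2*k) : ℝ) := by
            exact_mod_cast ngirth_le_nc n m ℓ k hk2 hkl
      _ ≤ Real.exp (C * (t : ℝ) ^ (-(1 : ℝ) / (K - 1)) * (n : ℝ) ^ a * Real.log t) *
            (Real.exp 1 * (t : ℝ) * (n : ℝ) ^ a / (m : ℝ)) ^ m := hbound
      _ ≤ Real.exp (2*(K-1)*|C| * m) *
            (Real.exp 1 * ((Real.log n)^(k-1) * ((n:ℝ)^a/m)^k)) ^ m := by
          apply mul_le_mul (Real.exp_le_exp.mpr hexp)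
            (pow_le_pow_left₀ (by positivity) hedge m) (by positivity) (Real.exp_nonneg _)
      _ = Real.exp ((2*(K-1)*|C| + 1) * m) * (Real.log n) ^ ((k - 1) * m) *
            ((n : ℝ) ^ a / (m : ℝ)) ^ (k * m) := by
          rw [mul_pow, mul_pow, ← pow_mul, ← pow_mul, Real.exp_one_pow,
            show ((2*(K-1)*|C| + 1) * (m:ℝ)) = 2*(K-1)*|C| * m + m by ring, Real.exp_add]
          push_cast
          ring
    · -- degenerate regime: t = 2, count is zero
      push_neg at hx3
      have hxlt : x < 3 := by
        by_contra h
        push_neg at h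
        have h1 : x ^ 1 ≤ x ^ (k-1) := pow_le_pow_right₀ (by linarith) (by omega)
        rw [pow_one] at h1
        linarith
      have hm_big : (n:ℝ)^a * Real.log n < 3 * m := by
        rw [hxdef, div_lt_iff₀ hm0] at hxlt
        linarith
      have h2n : (2:ℝ) ≤ (n:ℝ) ^ (α/2) := by
        rw [Real.le_rpow_iff_log_le (by norm_num) hn0]
        have hlog2 : Real.log 2 ≤ 1 := by
          have := Real.log_le_sub_one_of_pos (by norm_num : (0:ℝ) < 2); linarith
        have h9 : (1:ℝ) ≤ α/2 * Real.log n := by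
          rw [div_mul_eq_mul_div, le_div_iff₀ (by norm_num : (0:ℝ) < 2)]
          calc (1:ℝ) * 2 = 2 := by ring
          _ = α * (2/α) := by field_simp
          _ ≤ α * Real.log n := by gcongr
        nlinarith
      have hpowle : (Real.log n)^(k-1) ≤ (n:ℝ) ^ (α/2) := by
        calc (Real.log n)^(k-1) ≤ ((n:ℝ) ^ (α/(2*(K-1))))^(k-1) :=
              pow_le_pow_left₀ (by linarith) hlogpow _
        _ = (n:ℝ) ^ (α/2) := by
            rw [← Real.rpow_natCast ((n:ℝ) ^ (α/(2*(K-1)))) (k-1), ← Real.rpow_mul hn0.le,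
              hkcast]
            congr 1
            field_simp
      have hadm2 : ((2:ℕ):ℝ) ≤ (n : ℝ) ^ α / (Real.log n) ^ (k - 1) := by
        have hpowpos : (0:ℝ) < (Real.log n)^(k-1) := by positivity
        calc ((2:ℕ):ℝ) = 2 := by norm_num
        _ ≤ (n:ℝ) ^ (α/2) := h2n
        _ = (n:ℝ) ^ α / (n:ℝ) ^ (α/2) := by
            rw [← Real.rpow_sub hn0]; congr 1; ring
        _ ≤ (n:ℝ) ^ α / (Real.log n)^(k-1) := by gcongr
      have hb2 := hcont n m 2 le_rfl hadm2
      have hbase : Real.exp 1 * ((2:ℕ):ℝ) * (n:ℝ)^a / m ≤ Real.exp (-2) := by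
        have h1 : (n:ℝ)^a / m ≤ 3 / Real.log n := by
          rw [div_le_div_iff₀ hm0 hlogpos]
          nlinarith
        calc Real.exp 1 * ((2:ℕ):ℝ) * (n:ℝ)^a / m = 2 * Real.exp 1 * ((n:ℝ)^a / m) := by
              push_cast; ring
        _ ≤ 2 * Real.exp 1 * (3 / Real.log n) := by gcongr
        _ = 6 * Real.exp 1 / Real.log n := by ring
        _ ≤ 6 * Real.exp 1 / (12 * Real.exp 3) := by gcongr
        _ = Real.exp (1 - 3) / 2 := by rw [Real.exp_sub]; ring
        _ ≤ Real.exp (-2) := by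
            norm_num
            linarith [Real.exp_pos (-2:ℝ)]
      have hA : C * ((2:ℕ):ℝ) ^ (-(1 : ℝ) / (K - 1)) * (n : ℝ) ^ a * Real.log ((2:ℕ):ℝ)
          ≤ |C| * (n:ℝ)^a := by
        have h2r0 : (0:ℝ) < ((2:ℕ):ℝ) ^ (-(1 : ℝ) / (K - 1)) :=
          rpow_pos_of_pos (by norm_num) _
        have h2r1 : ((2:ℕ):ℝ) ^ (-(1 : ℝ) / (K - 1)) ≤ 1 := by
          apply Real.rpow_le_one_of_one_le_of_nonpos (by norm_num)
          rw [neg_div]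
          simp only [Left.neg_nonpos_iff]
          positivity
        have hlog2 : Real.log ((2:ℕ):ℝ) ≤ 1 := by
          have := Real.log_le_sub_one_of_pos (by norm_num : (0:ℝ) < ((2:ℕ):ℝ))
          push_cast at this ⊢
          linarith
        have hlog2' : (0:ℝ) ≤ Real.log ((2:ℕ):ℝ) := Real.log_nonneg (by norm_num)
        calc C * ((2:ℕ):ℝ) ^ (-(1 : ℝ) / (K - 1)) * (n : ℝ) ^ a * Real.log ((2:ℕ):ℝ)
            = C * (((2:ℕ):ℝ) ^ (-(1 : ℝ) / (K - 1)) * (n : ℝ) ^ a * Real.log ((2:ℕ):ℝ)) := by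
              ring
        _ ≤ |C| * (((2:ℕ):ℝ) ^ (-(1 : ℝ) / (K - 1)) * (n : ℝ) ^ a * Real.log ((2:ℕ):ℝ)) :=
            mul_le_mul_of_nonneg_right (le_abs_self C)
              (mul_nonneg (mul_nonneg h2r0.le hna.le) hlog2')
        _ ≤ |C| * (1 * (n : ℝ) ^ a * 1) := by
            gcongr
        _ = |C| * (n:ℝ)^a := by ring
      have hlt1 : Real.exp (C * ((2:ℕ):ℝ) ^ (-(1 : ℝ) / (K - 1)) * (n : ℝ) ^ a *
            Real.log ((2:ℕ):ℝ)) * (Real.exp 1 * ((2:ℕ):ℝ) * (n : ℝ) ^ a / (m : ℝ)) ^ m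
          < 1 := by
        have hpow : (Real.exp 1 * ((2:ℕ):ℝ) * (n : ℝ) ^ a / (m : ℝ)) ^ m
            ≤ Real.exp (-2) ^ m := pow_le_pow_left₀ (by positivity) hbase m
        have hexpm : Real.exp (-2:ℝ) ^ m = Real.exp (-(2*m)) := by
          rw [← Real.exp_nat_mul]
          ring_nf
        have hCm : |C| * (n:ℝ)^a < 2 * m := by
          have e1 : |C| ≤ (Real.log n - 3)/3 := by linarith
          have e2 : |C| * (n:ℝ)^a ≤ (n:ℝ)^a * Real.log n / 3 - (n:ℝ)^a := by
            calc |C| * (n:ℝ)^a ≤ (Real.log n - 3)/3 * (n:ℝ)^a :=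
                  mul_le_mul_of_nonneg_right e1 hna.le
            _ = (n:ℝ)^a * Real.log n / 3 - (n:ℝ)^a := by ring
          linarith
        calc Real.exp (C * ((2:ℕ):ℝ) ^ (-(1 : ℝ) / (K - 1)) * (n : ℝ) ^ a *
              Real.log ((2:ℕ):ℝ)) * (Real.exp 1 * ((2:ℕ):ℝ) * (n : ℝ) ^ a / (m : ℝ)) ^ m
            ≤ Real.exp (|C| * (n:ℝ)^a) * Real.exp (-(2*m)) := by
              apply mul_le_mul (Real.exp_le_exp.mpr hA) (hexpm ▸ hpow) (by positivity)
                (Real.exp_nonneg _)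
        _ = Real.exp (|C| * (n:ℝ)^a - 2*m) := by rw [← Real.exp_add]; ring_nf
        _ < 1 := by
            rw [Real.exp_lt_one_iff]
            linarith
      have hNC0 : NC n m (2*k) = 0 := by
        have h := hb2.trans_lt hlt1
        exact_mod_cast Nat.lt_one_iff.mp (by exact_mod_cast h)
      have hg0 : Ngirth2 n m ℓ = 0 :=
        Nat.le_zero.mp (hNC0 ▸ ngirth_le_nc n m ℓ k hk2 hkl)
      rw [hg0]
      push_cast
      exact hRHS0
  obtain ⟨N₀, hN₀⟩ := eventually_atTop.mp hev
  exact ⟨N₀, fun n hn m hm => hN₀ n hn m hm⟩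
end
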